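/- Let M, B, C, D, E, F be random variables on a common probability space taking values in nonempty finite sets, and let n, ε, δ, K be real numbers with n ≥ 0, ε ≥ 0, δ ≥ 0. Assume: (i) H[M] = K·n; (ii) M is independent of the triple (B, D, F); (iii) the quadruple (M, B, C, D) is independent of F; (iv) C and D are conditionally independent given the pair (M, B); (v) H[B] ≤ n, H[C] ≤ n, H[D] ≤ n, and H[E] ≤ (K−1)·n; (vi) H[M | C, D, E, F] ≤ n·ε; (vii) H[M | C] ≥ K·n − n·δ. Then the mutual information satisfies I[B : D] ≥ n − 8·n·ε − 5·n·δ. -/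

import Mathlib

open MeasureTheory ProbabilityTheory
open scoped ENNReal

/-- Shannon entropy `H[X]` of a random variable `X` taking values in a finite set,
with respect to the measure `μ`. -/
noncomputable def Hent {Ω S : Type*} [MeasurableSpace Ω] [Fintype S]
    (μ : Measure Ω) (X : Ω → S) : ℝ :=
  ∑ s : S, Real.negMulLog (μ (X ⁻¹' {s})).toReal

/-- Conditional Shannon entropy `H[X | Y] = H[X, Y] - H[Y]`. -/
noncomputable def condHent {Ω S T : Type*} [MeasurableSpace Ω] [Fintype S] [Fintype T]
    (μ : Measure Ω) (X : Ω → S) (Y : Ω → T) : ℝ :=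
  Hent μ (fun ω => (X ω, Y ω)) - Hent μ Y

/-- Mutual information `I[X : Y] = H[X] - H[X | Y]`. -/
noncomputable def mutInfo {Ω S T : Type*} [MeasurableSpace Ω] [Fintype S] [Fintype T]
    (μ : Measure Ω) (X : Ω → S) (Y : Ω → T) : ℝ :=
  Hent μ X - condHent μ X Y

/-- `X` and `Y` are conditionally independent given `Z` (with respect to `μ`). -/
def CondIndepFunOf {Ω S T U : Type*} [MeasurableSpace Ω] (μ : Measure Ω)
    (X : Ω → S) (Y : Ω → T) (Z : Ω → U) : Prop :=
  ∀ (x : S) (y : T) (z : U),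
    μ (X ⁻¹' {x} ∩ Y ⁻¹' {y} ∩ Z ⁻¹' {z}) * μ (Z ⁻¹' {z}) =
      μ (X ⁻¹' {x} ∩ Z ⁻¹' {z}) * μ (Y ⁻¹' {y} ∩ Z ⁻¹' {z})

/-!
Conditional independence of `C` and `D` given `(M, B)` and independence of `M` from `(B, D)`
give `H[D | B] = H[D | M, B] = H[D | C, M, B] ≤ H[D | M, C]`, hence
`H[M | C] - H[M | C, D] = H[D | C] - H[D | M, C] ≤ H[D] - H[D | B] = I[B : D]`.
Secrecy bounds `H[M | C]` below by `K n - n δ`; decodability, the independence of `F` and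
`H[E] ≤ (K - 1) n` bound `H[M | C, D]` above by `(K - 1) n + n ε`. So `I[B : D] ≥ n - n ε - n δ`.

The Shannon inequalities involved are proved fibrewise over the conditioning variable, using the
unnormalised restrictions `μ.restrict (Z ⁻¹' {z})`, from a homogeneous form of subadditivity of
`∑ negMulLog` for a nonnegative matrix and its marginals, which is `log x ≤ x - 1`.
-/
open Finset

namespace Real

lemma negMulLog_sum_le_sum_negMulLog {ι : Type*} (s : Finset ι) {p : ι → ℝ}
    (hp : ∀ i ∈ s, 0 ≤ p i) : negMulLog (∑ i ∈ s, p i) ≤ ∑ i ∈ s, negMulLog (p i) := by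
  calc negMulLog (∑ i ∈ s, p i) = ∑ i ∈ s, -(p i * log (∑ j ∈ s, p j)) := by
        rw [negMulLog, neg_mul, sum_mul, ← sum_neg_distrib]
    _ ≤ ∑ i ∈ s, negMulLog (p i) := sum_le_sum fun i hi => ?_
  rcases (hp i hi).eq_or_lt with h0 | h0
  · simp [← h0]
  · rw [negMulLog_eq_neg, neg_le_neg_iff]
    exact mul_le_mul_of_nonneg_left (log_le_log h0 (single_le_sum hp hi)) h0.le

-- `q * log (a * b / (q * c)) ≤ a * b / c - q`, i.e. `log x ≤ x - 1`.
lemma negMulLog_add_mul_log_le {q a b c : ℝ} (hq : 0 ≤ q) (ha : q ≤ a) (hb : q ≤ b)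
    (hc : a ≤ c) : negMulLog q + q * log a + q * log b - q * log c ≤ a * b / c - q := by
  rcases hq.eq_or_lt with rfl | hq
  · simp only [negMulLog_zero, zero_mul, add_zero, sub_zero]
    exact div_nonneg (mul_nonneg ha hb) (ha.trans hc)
  have ha := hq.trans_le ha
  have hb := hq.trans_le hb
  have hc := ha.trans_le hc
  have hx : 0 < a * b / (q * c) := by positivity
  calc negMulLog q + q * log a + q * log b - q * log c = q * log (a * b / (q * c)) := by
        rw [log_div (by positivity) (by positivity), log_mul ha.ne' hb.ne',
          log_mul hq.ne' hc.ne', negMulLog]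
        ring
    _ ≤ q * (a * b / (q * c) - 1) := mul_le_mul_of_nonneg_left (log_le_sub_one_of_pos hx) hq.le
    _ = a * b / c - q := by field_simp

lemma negMulLog_add_mul_log_eq_zero {q a b c : ℝ} (hq : 0 ≤ q) (ha : q ≤ a) (hb : q ≤ b)
    (hc : a ≤ c) (h : q * c = a * b) : negMulLog q + q * log a + q * log b - q * log c = 0 := by
  rcases hq.eq_or_lt with rfl | hq
  · simp
  have hlog : log q + log c = log a + log b := by
    rw [← log_mul hq.ne' (hq.trans_le (ha.trans hc)).ne', h,
      log_mul (hq.trans_le ha).ne' (hq.trans_le hb).ne']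
  rw [negMulLog]
  linear_combination (-q) * hlog

variable {S T : Type*} [Fintype S] [Fintype T]

lemma sum_negMulLog_marginals_sub (q : S → T → ℝ) :
    ∑ x, negMulLog (∑ y, q x y) + ∑ y, negMulLog (∑ x, q x y)
      - (∑ x, ∑ y, negMulLog (q x y) + negMulLog (∑ x, ∑ y, q x y))
      = -∑ x, ∑ y, (negMulLog (q x y) + q x y * log (∑ y', q x y')
          + q x y * log (∑ x', q x' y) - q x y * log (∑ x', ∑ y', q x' y')) := by
  simp only [negMulLog_eq_neg, sum_mul, sum_add_distrib, sum_sub_distrib, sum_neg_distrib]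
  rw [sum_comm (f := fun x y => q x y * log (∑ x', q x' y))]
  ring

lemma sum_negMulLog_add_negMulLog_sum_le (q : S → T → ℝ) (hq : ∀ x y, 0 ≤ q x y) :
    ∑ x, ∑ y, negMulLog (q x y) + negMulLog (∑ x, ∑ y, q x y)
      ≤ ∑ x, negMulLog (∑ y, q x y) + ∑ y, negMulLog (∑ x, q x y) := by
  have hterm : ∀ x y, negMulLog (q x y) + q x y * log (∑ y', q x y')
      + q x y * log (∑ x', q x' y) - q x y * log (∑ x', ∑ y', q x' y')
      ≤ (∑ y', q x y') * (∑ x', q x' y) / (∑ x', ∑ y', q x' y') - q x y := fun x y =>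
    negMulLog_add_mul_log_le (hq x y) (single_le_sum (fun y _ => hq x y) (mem_univ y))
      (single_le_sum (fun x _ => hq x y) (mem_univ x))
      (single_le_sum (fun x _ => sum_nonneg fun y _ => hq x y) (mem_univ x))
  have hzero : ∑ x, ∑ y, ((∑ y', q x y') * (∑ x', q x' y) / (∑ x', ∑ y', q x' y') - q x y)
      = 0 := by
    simp only [sum_sub_distrib, ← sum_div, ← mul_sum, ← sum_mul]
    rw [sum_comm (f := fun y x => q x y)]
    rcases eq_or_ne (∑ x', ∑ y', q x' y') 0 with h | h
    · simp [h]
    · field_simp; ring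
  have := sum_le_sum fun x (_ : x ∈ univ) => sum_le_sum fun y (_ : y ∈ univ) => hterm x y
  linarith [sum_negMulLog_marginals_sub q]

lemma sum_negMulLog_add_negMulLog_sum_eq (q : S → T → ℝ) (hq : ∀ x y, 0 ≤ q x y)
    (h : ∀ x y, q x y * ∑ x', ∑ y', q x' y' = (∑ y', q x y') * ∑ x', q x' y) :
    ∑ x, ∑ y, negMulLog (q x y) + negMulLog (∑ x, ∑ y, q x y)
      = ∑ x, negMulLog (∑ y, q x y) + ∑ y, negMulLog (∑ x, q x y) := by
  have hterm : ∀ x y, negMulLog (q x y) + q x y * log (∑ y', q x y')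
      + q x y * log (∑ x', q x' y) - q x y * log (∑ x', ∑ y', q x' y') = 0 := fun x y =>
    negMulLog_add_mul_log_eq_zero (hq x y) (single_le_sum (fun y _ => hq x y) (mem_univ y))
      (single_le_sum (fun x _ => hq x y) (mem_univ x))
      (single_le_sum (fun x _ => sum_nonneg fun y _ => hq x y) (mem_univ x)) (h x y)
  have := sum_negMulLog_marginals_sub q
  simp only [hterm, sum_const_zero, neg_zero] at this
  linarith

end Real

open Real Function

section Entropy

variable {Ω S T U V : Type*} [MeasurableSpace Ω] {μ : Measure Ω} [Fintype S] [Fintype T]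
  [Fintype U] [Fintype V]

lemma Hent_eq_of_injective {X : Ω → S} {Y : Ω → T} (f : S → T) (hf : Injective f)
    (hY : ∀ ω, Y ω = f (X ω)) : Hent μ Y = Hent μ X := by
  classical
  obtain rfl : Y = fun ω => f (X ω) := funext hY
  refine (Fintype.sum_of_injective f hf _ _ (fun t ht => ?_) fun s => ?_).symm
  · have : (fun ω => f (X ω)) ⁻¹' {t} = ∅ :=
      Set.eq_empty_of_forall_notMem fun ω hω => ht ⟨X ω, hω⟩
    simp [this]
  · congr 3
    ext ω
    simp [hf.eq_iff]

lemma Hent_pair_comm (X : Ω → S) (Y : Ω → T) :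
    Hent μ (fun ω => (X ω, Y ω)) = Hent μ (fun ω => (Y ω, X ω)) :=
  Hent_eq_of_injective Prod.swap Prod.swap_injective fun _ => rfl

lemma condHent_comp_of_injective (X : Ω → S) (Y : Ω → T) {g : T → U} (hg : Injective g) :
    condHent μ X (fun ω => g (Y ω)) = condHent μ X Y := by
  unfold condHent
  congr 1
  · exact Hent_eq_of_injective (Prod.map id g) (injective_id.prodMap hg) fun _ => rfl
  · exact Hent_eq_of_injective g hg fun _ => rfl

lemma Hent_pair_eq_sum (X : Ω → S) (Y : Ω → T) :
    Hent μ (fun ω => (X ω, Y ω)) = ∑ x, ∑ y, negMulLog (μ.real (X ⁻¹' {x} ∩ Y ⁻¹' {y})) := by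
  simp only [Hent, Fintype.sum_prod_type, ← Set.singleton_prod_singleton, Set.mk_preimage_prod]
  rfl

lemma Hent_pair_eq_sum_restrict (W : Ω → V) {Z : Ω → U} [MeasurableSpace U]
    [MeasurableSingletonClass U] (hZ : Measurable Z) :
    Hent μ (fun ω => (W ω, Z ω)) = ∑ z, Hent (μ.restrict (Z ⁻¹' {z})) W := by
  rw [Hent_pair_eq_sum, sum_comm]
  refine sum_congr rfl fun z _ => sum_congr rfl fun w _ => ?_
  rw [measureReal_def, Measure.restrict_apply' (hZ (measurableSet_singleton z))]

lemma Hent_eq_sum_negMulLog_restrict (Z : Ω → U) :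
    Hent μ Z = ∑ z, negMulLog ((μ.restrict (Z ⁻¹' {z})).real Set.univ) := by
  simp [Hent, measureReal_def]

variable [MeasurableSpace S] [MeasurableSingletonClass S]
  [MeasurableSpace T] [MeasurableSingletonClass T]
  [MeasurableSpace U] [MeasurableSingletonClass U]
  [MeasurableSpace V] [MeasurableSingletonClass V]

lemma sum_measureReal_preimage_singleton_inter [IsFiniteMeasure μ] {X : Ω → S}
    (hX : Measurable X) (A : Set Ω) : ∑ x, μ.real (X ⁻¹' {x} ∩ A) = μ.real A := by
  have h := sum_measureReal_preimage_singleton (μ := μ.restrict A) univ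
    fun x _ => hX (measurableSet_singleton x)
  simpa [measureReal_restrict_apply (hX (measurableSet_singleton _))] using h

lemma sum_measureReal_inter_preimage_singleton [IsFiniteMeasure μ] {X : Ω → S}
    (hX : Measurable X) (A : Set Ω) : ∑ x, μ.real (A ∩ X ⁻¹' {x}) = μ.real A := by
  simpa only [Set.inter_comm] using sum_measureReal_preimage_singleton_inter hX A

lemma sum_measureReal_preimage_singleton_eq_univ [IsFiniteMeasure μ] {X : Ω → S}
    (hX : Measurable X) : ∑ x, μ.real (X ⁻¹' {x}) = μ.real Set.univ := by
  simpa using sum_measureReal_preimage_singleton_inter (μ := μ) hX Set.univ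

variable {X : Ω → S} {Y : Ω → T} {Z : Ω → U}

lemma negMulLog_measureReal_univ_le_Hent [IsFiniteMeasure μ] (hX : Measurable X) :
    negMulLog (μ.real Set.univ) ≤ Hent μ X := by
  rw [← sum_measureReal_preimage_singleton_eq_univ hX]
  exact negMulLog_sum_le_sum_negMulLog _ fun _ _ => measureReal_nonneg

lemma Hent_pair_add_negMulLog_le [IsFiniteMeasure μ] (hX : Measurable X) (hY : Measurable Y) :
    Hent μ (fun ω => (X ω, Y ω)) + negMulLog (μ.real Set.univ) ≤ Hent μ X + Hent μ Y := by
  have h := sum_negMulLog_add_negMulLog_sum_le (fun x y => μ.real (X ⁻¹' {x} ∩ Y ⁻¹' {y}))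
    fun _ _ => measureReal_nonneg
  simp only [sum_measureReal_inter_preimage_singleton hY,
    sum_measureReal_preimage_singleton_inter hX, sum_measureReal_preimage_singleton_eq_univ hX] at h
  rw [Hent_pair_eq_sum]
  exact h

lemma Hent_pair_add_negMulLog_eq [IsFiniteMeasure μ] (hX : Measurable X) (hY : Measurable Y)
    (h : ∀ x y, μ.real (X ⁻¹' {x} ∩ Y ⁻¹' {y}) * μ.real Set.univ
      = μ.real (X ⁻¹' {x}) * μ.real (Y ⁻¹' {y})) :
    Hent μ (fun ω => (X ω, Y ω)) + negMulLog (μ.real Set.univ) = Hent μ X + Hent μ Y := by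
  have h := sum_negMulLog_add_negMulLog_sum_eq (fun x y => μ.real (X ⁻¹' {x} ∩ Y ⁻¹' {y}))
    (fun _ _ => measureReal_nonneg) (by
      simpa only [sum_measureReal_inter_preimage_singleton hY,
        sum_measureReal_preimage_singleton_inter hX,
        sum_measureReal_preimage_singleton_eq_univ hX] using h)
  simp only [sum_measureReal_inter_preimage_singleton hY,
    sum_measureReal_preimage_singleton_inter hX, sum_measureReal_preimage_singleton_eq_univ hX] at h
  rw [Hent_pair_eq_sum]
  exact h

lemma Hent_submodular [IsFiniteMeasure μ] (hX : Measurable X) (hY : Measurable Y)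
    (hZ : Measurable Z) :
    Hent μ (fun ω => ((X ω, Y ω), Z ω)) + Hent μ Z
      ≤ Hent μ (fun ω => (X ω, Z ω)) + Hent μ (fun ω => (Y ω, Z ω)) := by
  rw [Hent_pair_eq_sum_restrict _ hZ, Hent_pair_eq_sum_restrict _ hZ,
    Hent_pair_eq_sum_restrict _ hZ, Hent_eq_sum_negMulLog_restrict Z, ← sum_add_distrib,
    ← sum_add_distrib]
  exact sum_le_sum fun z _ => Hent_pair_add_negMulLog_le hX hY

lemma Hent_submodular_eq_of_condIndepFunOf [IsFiniteMeasure μ] (hX : Measurable X)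
    (hY : Measurable Y) (hZ : Measurable Z) (h : CondIndepFunOf μ X Y Z) :
    Hent μ (fun ω => ((X ω, Y ω), Z ω)) + Hent μ Z
      = Hent μ (fun ω => (X ω, Z ω)) + Hent μ (fun ω => (Y ω, Z ω)) := by
  rw [Hent_pair_eq_sum_restrict _ hZ, Hent_pair_eq_sum_restrict _ hZ,
    Hent_pair_eq_sum_restrict _ hZ, Hent_eq_sum_negMulLog_restrict Z, ← sum_add_distrib,
    ← sum_add_distrib]
  refine sum_congr rfl fun z _ => Hent_pair_add_negMulLog_eq hX hY fun x y => ?_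
  simp only [measureReal_restrict_apply' (hZ (measurableSet_singleton z)), Set.univ_inter,
    measureReal_def, ← ENNReal.toReal_mul, h x y z]

lemma condHent_nonneg [IsFiniteMeasure μ] (hX : Measurable X) (hY : Measurable Y) :
    0 ≤ condHent μ X Y := by
  rw [condHent, Hent_pair_eq_sum_restrict X hY, Hent_eq_sum_negMulLog_restrict Y, sub_nonneg]
  exact sum_le_sum fun y _ => negMulLog_measureReal_univ_le_Hent hX

lemma condHent_pair_le [IsFiniteMeasure μ] (hX : Measurable X) (hY : Measurable Y)
    (hZ : Measurable Z) : condHent μ X (fun ω => (Y ω, Z ω)) ≤ condHent μ X Z := by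
  have hsub := Hent_submodular (μ := μ) hY hX hZ
  have e : Hent μ (fun ω => (X ω, Y ω, Z ω)) = Hent μ (fun ω => ((Y ω, X ω), Z ω)) :=
    Hent_eq_of_injective (fun p => (p.1.2, p.1.1, p.2))
      (LeftInverse.injective (g := fun p => ((p.2.1, p.1), p.2.2)) fun _ => rfl) fun _ => rfl
  unfold condHent
  linarith

lemma condHent_le_condHent_comp [IsFiniteMeasure μ] (hX : Measurable X) (hY : Measurable Y)
    (g : T → U) : condHent μ X Y ≤ condHent μ X (fun ω => g (Y ω)) :=
  calc condHent μ X Y = condHent μ X (fun ω => (Y ω, g (Y ω))) :=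
        (condHent_comp_of_injective X Y (g := fun y => (y, g y))
          (LeftInverse.injective (g := Prod.fst) fun _ => rfl)).symm
    _ ≤ condHent μ X (fun ω => g (Y ω)) :=
        condHent_pair_le hX hY (Measurable.of_discrete.comp hY)

lemma condHent_pair_eq_of_condIndepFunOf [IsFiniteMeasure μ] (hX : Measurable X)
    (hY : Measurable Y) (hZ : Measurable Z) (h : CondIndepFunOf μ X Y Z) :
    condHent μ Y (fun ω => (X ω, Z ω)) = condHent μ Y Z := by
  have hsub := Hent_submodular_eq_of_condIndepFunOf hX hY hZ h
  have e : Hent μ (fun ω => (Y ω, X ω, Z ω)) = Hent μ (fun ω => ((X ω, Y ω), Z ω)) :=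
    Hent_eq_of_injective (fun p => (p.1.2, p.1.1, p.2))
      (LeftInverse.injective (g := fun p => ((p.2.1, p.1), p.2.2)) fun _ => rfl) fun _ => rfl
  unfold condHent
  linarith

section Probability

variable [IsProbabilityMeasure μ]

lemma Hent_pair_le (hX : Measurable X) (hY : Measurable Y) :
    Hent μ (fun ω => (X ω, Y ω)) ≤ Hent μ X + Hent μ Y := by
  simpa using Hent_pair_add_negMulLog_le (μ := μ) hX hY

lemma Hent_pair_eq_add_of_indepFun (hX : Measurable X) (hY : Measurable Y)
    (h : IndepFun X Y μ) : Hent μ (fun ω => (X ω, Y ω)) = Hent μ X + Hent μ Y := by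
  have hmul : ∀ x y, μ.real (X ⁻¹' {x} ∩ Y ⁻¹' {y}) * μ.real Set.univ
      = μ.real (X ⁻¹' {x}) * μ.real (Y ⁻¹' {y}) := fun x y => by
    simp [measureReal_def, h.measure_inter_preimage_eq_mul _ _ (measurableSet_singleton x)
      (measurableSet_singleton y)]
  simpa using Hent_pair_add_negMulLog_eq hX hY hmul

lemma condHent_pair_eq_of_indepFun (hX : Measurable X) (hY : Measurable Y)
    (hZ : Measurable Z) (h : IndepFun Z (fun ω => (Y ω, X ω)) μ) :
    condHent μ X (fun ω => (Z ω, Y ω)) = condHent μ X Y := by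
  have hZYX := Hent_pair_eq_add_of_indepFun hZ (hY.prodMk hX) h
  have hZY := Hent_pair_eq_add_of_indepFun hZ hY (h.comp measurable_id measurable_fst)
  have e : Hent μ (fun ω => (X ω, Z ω, Y ω)) = Hent μ (fun ω => (Z ω, Y ω, X ω)) :=
    Hent_eq_of_injective (fun p => (p.2.2, p.1, p.2.1))
      (LeftInverse.injective (g := fun p => (p.2.1, p.2.2, p.1)) fun _ => rfl) fun _ => rfl
  unfold condHent
  linarith [Hent_pair_comm (μ := μ) X Y]

lemma condHent_le_condHent_pair_add {W : Ω → V} (hX : Measurable X) (hY : Measurable Y)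
    (hW : Measurable W) :
    condHent μ X Y ≤ condHent μ X (fun ω => (Y ω, W ω)) + Hent μ W := by
  have h := condHent_nonneg (μ := μ) hW (hX.prodMk hY)
  have e : Hent μ (fun ω => (W ω, X ω, Y ω)) = Hent μ (fun ω => (X ω, Y ω, W ω)) :=
    Hent_eq_of_injective (fun p => (p.2.2, p.1, p.2.1))
      (LeftInverse.injective (g := fun p => (p.2.1, p.2.2, p.1)) fun _ => rfl) fun _ => rfl
  unfold condHent at *
  linarith [Hent_pair_le (μ := μ) hY hW]

lemma condHent_sub_condHent_pair_le_mutInfo {M : Ω → V} {B : Ω → S} {C : Ω → T} {D : Ω → U}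
    (hM : Measurable M) (hB : Measurable B) (hC : Measurable C) (hD : Measurable D)
    (hCI : CondIndepFunOf μ C D (fun ω => (M ω, B ω)))
    (hind : IndepFun M (fun ω => (B ω, D ω)) μ) :
    condHent μ M C - condHent μ M (fun ω => (C ω, D ω)) ≤ mutInfo μ B D := by
  have hDB : condHent μ D B ≤ condHent μ D (fun ω => (M ω, C ω)) :=
    calc condHent μ D B = condHent μ D (fun ω => (M ω, B ω)) :=
          (condHent_pair_eq_of_indepFun hD hB hM hind).symm
      _ = condHent μ D (fun ω => (C ω, M ω, B ω)) :=
          (condHent_pair_eq_of_condIndepFunOf hC hD (hM.prodMk hB) hCI).symm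
      _ ≤ condHent μ D (fun ω => (M ω, C ω)) :=
          condHent_le_condHent_comp hD (hC.prodMk (hM.prodMk hB)) fun p => (p.2.1, p.1)
  have e : Hent μ (fun ω => (M ω, C ω, D ω)) = Hent μ (fun ω => (D ω, M ω, C ω)) :=
    Hent_eq_of_injective (fun p => (p.2.1, p.2.2, p.1))
      (LeftInverse.injective (g := fun p => (p.2.2, p.1, p.2.1)) fun _ => rfl) fun _ => rfl
  unfold mutInfo condHent at *
  linarith [Hent_pair_le (μ := μ) hC hD, Hent_pair_comm (μ := μ) B D]

end Probability

end Entropy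

theorem secrecy_converse_core_general
    {Ω SM SB SC SD SE SF : Type*} [MeasurableSpace Ω]
    [Fintype SM] [MeasurableSpace SM] [MeasurableSingletonClass SM]
    [Fintype SB] [MeasurableSpace SB] [MeasurableSingletonClass SB]
    [Fintype SC] [MeasurableSpace SC] [MeasurableSingletonClass SC]
    [Fintype SD] [MeasurableSpace SD] [MeasurableSingletonClass SD]
    [Fintype SE] [MeasurableSpace SE] [MeasurableSingletonClass SE]
    [Fintype SF] [MeasurableSpace SF] [MeasurableSingletonClass SF]
    (μ : Measure Ω) [IsProbabilityMeasure μ]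
    (M : Ω → SM) (B : Ω → SB) (C : Ω → SC) (D : Ω → SD) (E : Ω → SE) (F : Ω → SF)
    (hMm : Measurable M) (hBm : Measurable B) (hCm : Measurable C)
    (hDm : Measurable D) (hEm : Measurable E) (hFm : Measurable F)
    (n ε δ K : ℝ) (hn : 0 ≤ n) (hε : 0 ≤ ε) (hδ : 0 ≤ δ)
    (hIndBDF : IndepFun M (fun ω => (B ω, D ω, F ω)) μ)
    (hIndF : IndepFun (fun ω => (M ω, B ω, C ω, D ω)) F μ)
    (hCI : CondIndepFunOf μ C D (fun ω => (M ω, B ω)))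
    (hHE : Hent μ E ≤ (K - 1) * n)
    (hFano : condHent μ M (fun ω => (C ω, D ω, E ω, F ω)) ≤ n * ε)
    (hSecrecy : condHent μ M C ≥ K * n - n * δ) :
    mutInfo μ B D ≥ n - 8 * n * ε - 5 * n * δ := by
  have hdecode : condHent μ M (fun ω => (C ω, D ω)) ≤ n * ε + (K - 1) * n :=
    calc condHent μ M (fun ω => (C ω, D ω))
        = condHent μ M (fun ω => (F ω, C ω, D ω)) :=
          (condHent_pair_eq_of_indepFun hMm (hCm.prodMk hDm) hFm
            (hIndF.symm.comp measurable_id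
              (ψ := fun p : SM × SB × SC × SD => ((p.2.2.1, p.2.2.2), p.1))
              Measurable.of_discrete)).symm
      _ ≤ condHent μ M (fun ω => ((F ω, C ω, D ω), E ω)) + Hent μ E :=
          condHent_le_condHent_pair_add hMm (hFm.prodMk (hCm.prodMk hDm)) hEm
      _ ≤ condHent μ M (fun ω => (C ω, D ω, E ω, F ω)) + Hent μ E := by
          gcongr
          exact condHent_le_condHent_comp hMm ((hFm.prodMk (hCm.prodMk hDm)).prodMk hEm)
            fun p => (p.1.2.1, p.1.2.2, p.2, p.1.1)
      _ ≤ n * ε + (K - 1) * n := add_le_add hFano hHE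
  have hleak := condHent_sub_condHent_pair_le_mutInfo hMm hBm hCm hDm hCI
    (hIndBDF.comp measurable_id (measurable_fst.prodMk (measurable_fst.comp measurable_snd)))
  linarith [mul_nonneg hn hε, mul_nonneg hn hδ]

theorem secrecy_converse_core
    {Ω SM SB SC SD SE SF : Type*} [MeasurableSpace Ω]
    [Fintype SM] [Nonempty SM] [MeasurableSpace SM] [MeasurableSingletonClass SM]
    [Fintype SB] [Nonempty SB] [MeasurableSpace SB] [MeasurableSingletonClass SB]
    [Fintype SC] [Nonempty SC] [MeasurableSpace SC] [MeasurableSingletonClass SC]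
    [Fintype SD] [Nonempty SD] [MeasurableSpace SD] [MeasurableSingletonClass SD]
    [Fintype SE] [Nonempty SE] [MeasurableSpace SE] [MeasurableSingletonClass SE]
    [Fintype SF] [Nonempty SF] [MeasurableSpace SF] [MeasurableSingletonClass SF]
    (μ : Measure Ω) [IsProbabilityMeasure μ]
    (M : Ω → SM) (B : Ω → SB) (C : Ω → SC) (D : Ω → SD) (E : Ω → SE) (F : Ω → SF)
    (hMm : Measurable M) (hBm : Measurable B) (hCm : Measurable C)
    (hDm : Measurable D) (hEm : Measurable E) (hFm : Measurable F)
    (n ε δ K : ℝ) (hn : 0 ≤ n) (hε : 0 ≤ ε) (hδ : 0 ≤ δ)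
    (hHM : Hent μ M = K * n)
    (hIndBDF : IndepFun M (fun ω => (B ω, D ω, F ω)) μ)
    (hIndF : IndepFun (fun ω => (M ω, B ω, C ω, D ω)) F μ)
    (hCI : CondIndepFunOf μ C D (fun ω => (M ω, B ω)))
    (hHB : Hent μ B ≤ n) (hHC : Hent μ C ≤ n) (hHD : Hent μ D ≤ n)
    (hHE : Hent μ E ≤ (K - 1) * n)
    (hFano : condHent μ M (fun ω => (C ω, D ω, E ω, F ω)) ≤ n * ε)
    (hSecrecy : condHent μ M C ≥ K * n - n * δ) :
    mutInfo μ B D ≥ n - 8 * n * ε - 5 * n * δ :=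
  secrecy_converse_core_general μ M B C D E F hMm hBm hCm hDm hEm hFm n ε δ K hn hε hδ hIndBDF hIndF
    hCI hHE hFano hSecrecy
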